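/- If w is an element of the q-th term of the lower central series of the free group on a_1,...,a_m, then the Magnus expansion M(w) equals 1 plus terms of degree ≥ q. -/

import Mathlib

/-- Coefficient function (indexed by words in the variables `X_1, …, X_m`) of the
Magnus expansion of a single free-group letter: the letter `a_j` is sent to `1 + X_j`,
and the inverse letter `a_j⁻¹` is sent to `∑_{k ≥ 0} (-1)^k X_j^k`. -/
def magnusLetter {m : ℕ} (x : Fin m × Bool) : List (Fin m) → ℤ :=
  fun w =>
    if x.2 then (if w = [] ∨ w = [x.1] then 1 else 0)
    else (if w.all (· = x.1) then (-1) ^ w.length else 0)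

/-- Convolution product of coefficient functions: this is the multiplication of
formal power series in non-commuting variables, expressed on coefficients. -/
def magnusConv {m : ℕ} (f g : List (Fin m) → ℤ) : List (Fin m) → ℤ :=
  fun w => ∑ i ∈ Finset.range (w.length + 1), f (w.take i) * g (w.drop i)

/-- The coefficient function of the constant power series `1`. -/
def magnusOne {m : ℕ} : List (Fin m) → ℤ := fun w => if w = [] then 1 else 0

/-- The Magnus expansion: the homomorphism from the free group on `a_1, …, a_m` to the
ring of formal power series in non-commuting variables `X_1, …, X_m`, determined by
`a_j ↦ 1 + X_j`, described via its family of coefficients.  `magnus g w` is the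
coefficient of the word `w = X_{i_1} ⋯ X_{i_k}` in the expansion of `g`. -/
def magnus {m : ℕ} (g : FreeGroup (Fin m)) : List (Fin m) → ℤ :=
  (g.toWord.map magnusLetter).foldr magnusConv magnusOne


/-!
The Magnus ring is filtered by the additive subgroups `I_p` of series without terms of degree
`< p`, and `I_p * I_r ⊆ I_{p+r}`. The units `u` with `u - 1 ∈ I_p` form subgroups `U_p`, and
`⁅U_p, U_r⁆ ⊆ U_{p+r}` because
`u v u⁻¹ v⁻¹ - 1 = ((u - 1) (v - 1) - (v - 1) (u - 1)) u⁻¹ v⁻¹`.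
Every Magnus expansion lies in `U_1`, so by induction the `n`-th term of the lower central
series is mapped into `U_{n+1}`.
-/

open scoped commutatorElement

structure MulFiltration (R : Type*) [Ring R] where
  level : ℕ → AddSubgroup R
  level_zero : level 0 = ⊤
  mul_mem : ∀ {p r : ℕ} {a b : R}, a ∈ level p → b ∈ level r → a * b ∈ level (p + r)

namespace MulFiltration

variable {R : Type*} [Ring R] (F : MulFiltration R)

theorem mem_level_zero (a : R) : a ∈ F.level 0 := F.level_zero ▸ AddSubgroup.mem_top a

theorem mul_mem_right {p : ℕ} {a : R} (ha : a ∈ F.level p) (b : R) : a * b ∈ F.level p :=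
  F.mul_mem ha (F.mem_level_zero b)

def unitsSubgroup (p : ℕ) : Subgroup Rˣ where
  carrier := {u | (u : R) - 1 ∈ F.level p}
  one_mem' := by simp
  mul_mem' {u v} hu hv := by
    have h : ((u * v : Rˣ) : R) - 1 = ((u : R) - 1) * v + ((v : R) - 1) := by
      push_cast; noncomm_ring
    simpa only [Set.mem_ofPred_eq, h] using add_mem (F.mul_mem_right hu _) hv
  inv_mem' {u} hu := by
    have h : ((u⁻¹ : Rˣ) : R) - 1 = -(((u : R) - 1) * ↑u⁻¹) := by
      rw [sub_mul, Units.mul_inv, one_mul, neg_sub]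
    simpa only [Set.mem_ofPred_eq, h] using neg_mem (F.mul_mem_right hu _)

theorem mem_unitsSubgroup {p : ℕ} {u : Rˣ} :
    u ∈ F.unitsSubgroup p ↔ (u : R) - 1 ∈ F.level p := Iff.rfl

theorem commutator_mem_unitsSubgroup {p r : ℕ} {u v : Rˣ} (hu : u ∈ F.unitsSubgroup p)
    (hv : v ∈ F.unitsSubgroup r) : ⁅u, v⁆ ∈ F.unitsSubgroup (p + r) := by
  have h : ((⁅u, v⁆ : Rˣ) : R) - 1
      = (((u : R) - 1) * (v - 1) - (v - 1) * (u - 1)) * ↑(u⁻¹ * v⁻¹) := by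
    rw [show ((u : R) - 1) * (v - 1) - (v - 1) * (u - 1) = u * v - v * u by noncomm_ring]
    simp [commutatorElement_def, sub_mul, mul_assoc]
  rw [mem_unitsSubgroup, h]
  refine F.mul_mem_right (sub_mem (F.mul_mem hu hv) ?_) _
  exact add_comm p r ▸ F.mul_mem hv hu

theorem lowerCentralSeries_le_comap {G : Type*} [Group G] {φ : G →* Rˣ}
    (hφ : ∀ g, φ g ∈ F.unitsSubgroup 1) (n : ℕ) :
    (⊤ : Subgroup G).lowerCentralSeries n ≤ (F.unitsSubgroup (n + 1)).comap φ := by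
  refine Subgroup.descending_central_series_ge_lower (G := G)
    (fun n => (F.unitsSubgroup (n + 1)).comap φ) ⟨?_, fun x n hx g => ?_⟩ n
  · exact eq_top_iff.mpr fun g _ => hφ g
  · simpa only [Subgroup.mem_comap, map_commutatorElement] using
      F.commutator_mem_unitsSubgroup hx (hφ g)

end MulFiltration

/-- Formal power series in non-commuting variables indexed by `α`, as coefficient functions on
words; the type synonym carries the Cauchy product instead of the pointwise one. -/
def MagnusRing (α R : Type*) : Type _ := List α → R

namespace MagnusRing

open Finset

variable {α R : Type*}

instance [AddCommMonoid R] : AddCommMonoid (MagnusRing α R) := Pi.addCommMonoid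

instance [AddCommGroup R] : AddCommGroup (MagnusRing α R) := Pi.addCommGroup

section Semiring

variable [Semiring R]

instance : Mul (MagnusRing α R) :=
  ⟨fun f g w => ∑ i ∈ range (w.length + 1), f (w.take i) * g (w.drop i)⟩

instance : One (MagnusRing α R) := ⟨fun w => if w = [] then 1 else 0⟩

theorem mul_apply (f g : MagnusRing α R) (w : List α) :
    (f * g) w = ∑ i ∈ range (w.length + 1), f (w.take i) * g (w.drop i) := rfl

theorem one_apply (w : List α) : (1 : MagnusRing α R) w = if w = [] then 1 else 0 := rfl

theorem add_apply (f g : MagnusRing α R) (w : List α) : (f + g) w = f w + g w := rfl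

theorem zero_apply (w : List α) : (0 : MagnusRing α R) w = 0 := rfl

protected theorem one_mul (f : MagnusRing α R) : 1 * f = f := by
  funext w
  rw [mul_apply, sum_range_succ', sum_eq_zero fun i hi => ?_]
  · simp [one_apply]
  · have hne : w.take (i + 1) ≠ [] := by
      simpa using List.ne_nil_of_length_pos (Nat.zero_lt_of_lt (mem_range.mp hi))
    rw [one_apply, if_neg hne, zero_mul]

protected theorem mul_one (f : MagnusRing α R) : f * 1 = f := by
  funext w
  rw [mul_apply, sum_range_succ, sum_eq_zero fun i hi => ?_]
  · simp [one_apply]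
  · have hne : w.drop i ≠ [] := by simp_all
    rw [one_apply, if_neg hne, mul_zero]

protected theorem mul_assoc (f g h : MagnusRing α R) : f * g * h = f * (g * h) := by
  funext w
  simp only [mul_apply, sum_mul, mul_sum, List.length_take, List.length_drop]
  rw [sum_sigma', sum_sigma']
  refine sum_bij' (fun p _ => ⟨p.2, p.1 - p.2⟩) (fun p _ => ⟨p.1 + p.2, p.1⟩)
    ?_ ?_ ?_ ?_ ?_ <;> rintro ⟨i, j⟩ hij <;> simp only [mem_sigma, mem_range] at hij
  · simp only [mem_sigma, mem_range]; omega
  · simp only [mem_sigma, mem_range]; omega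
  · simp only [Sigma.mk.inj_iff, heq_eq_eq, and_true]; omega
  · simp only [Sigma.mk.inj_iff, heq_eq_eq, true_and]; omega
  · have hji : j ≤ i := by omega
    rw [List.take_take, min_eq_left hji, List.drop_take, List.drop_drop,
      Nat.add_sub_cancel' hji, mul_assoc]

instance : Semiring (MagnusRing α R) where
  mul_assoc := MagnusRing.mul_assoc
  one_mul := MagnusRing.one_mul
  mul_one := MagnusRing.mul_one
  left_distrib f g h := funext fun w => by simp [mul_apply, add_apply, mul_add, sum_add_distrib]
  right_distrib f g h := funext fun w => by simp [mul_apply, add_apply, add_mul, sum_add_distrib]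
  zero_mul f := funext fun w => by simp [mul_apply, zero_apply]
  mul_zero f := funext fun w => by simp [mul_apply, zero_apply]

end Semiring

instance [Ring R] : Ring (MagnusRing α R) where
  __ := (inferInstance : Semiring (MagnusRing α R))
  __ := (inferInstance : AddCommGroup (MagnusRing α R))

def reverse (f : MagnusRing α R) : MagnusRing α R := fun w => f w.reverse

theorem reverse_mul [CommSemiring R] (f g : MagnusRing α R) :
    reverse (f * g) = reverse g * reverse f := by
  funext w
  simp only [reverse, mul_apply, List.length_reverse]
  rw [← sum_range_reflect]
  refine sum_congr rfl fun i hi => ?_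
  have hi : i ≤ w.length := Nat.lt_succ_iff.mp (mem_range.mp hi)
  rw [List.take_reverse, List.drop_reverse, Nat.add_sub_cancel, Nat.sub_sub_self hi, mul_comm]

theorem reverse_one [Semiring R] : reverse (1 : MagnusRing α R) = 1 := by
  funext w
  simp [reverse, one_apply]

def degreeFiltration [Ring R] : MulFiltration (MagnusRing α R) where
  level p :=
    { carrier := {f | ∀ w : List α, w.length < p → f w = 0}
      add_mem' hf hg w hw := by rw [add_apply, hf w hw, hg w hw, add_zero]
      zero_mem' _ _ := rfl
      neg_mem' hf w hw := neg_eq_zero.mpr (hf w hw) }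
  level_zero := eq_top_iff.mpr fun f _ w hw => absurd hw (Nat.not_lt_zero _)
  mul_mem {p r f g} hf hg w hw := sum_eq_zero fun i hi => by
    rw [mem_range] at hi
    rcases lt_or_ge i p with hip | hip
    · rw [hf _ (by rw [List.length_take]; omega), zero_mul]
    · rw [hg _ (by rw [List.length_drop]; omega), mul_zero]

theorem apply_eq_one_apply_of_mem_unitsSubgroup [Ring R] {p : ℕ} {u : (MagnusRing α R)ˣ}
    (hu : u ∈ degreeFiltration.unitsSubgroup p) {w : List α} (hw : w.length < p) :
    (u : MagnusRing α R) w = (1 : MagnusRing α R) w :=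
  sub_eq_zero.mp (hu w hw)

end MagnusRing

namespace Magnus

open Finset MagnusRing

variable {m : ℕ}

/-- `magnusLetter x` as an element of the Magnus ring, so that `*` is the Cauchy product. -/
def letter (x : Fin m × Bool) : MagnusRing (Fin m) ℤ := magnusLetter x

theorem reverse_letter (x : Fin m × Bool) : reverse (letter x) = letter x := by
  funext w
  simp [reverse, letter, magnusLetter]

theorem letter_true_mul_letter_false (j : Fin m) : letter (j, true) * letter (j, false) = 1 := by
  funext w
  rcases w with _ | ⟨a, t⟩
  · rw [mul_apply]
    simp [letter, magnusLetter, one_apply]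
  -- `1 + X_j` has no terms of degree `≥ 2`, so only the first two splittings of `a :: t` count
  rw [mul_apply, List.length_cons, sum_range_succ', sum_range_succ', sum_eq_zero fun i hi => ?_]
  · by_cases ha : a = j
    · subst ha
      simp only [letter, magnusLetter, one_apply, List.take_succ_cons, List.take_zero,
        List.drop_succ_cons, List.drop_zero, List.all_cons, decide_true, Bool.true_and]
      split_ifs <;> simp_all [pow_succ]
    · simp [letter, magnusLetter, one_apply, ha]
  · have ht : t ≠ [] := List.ne_nil_of_length_pos (by simp only [mem_range] at hi; omega)
    simp [letter, magnusLetter, ht]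

theorem letter_false_mul_letter_true (j : Fin m) : letter (j, false) * letter (j, true) = 1 := by
  rw [← reverse_letter, ← reverse_letter (j, true), ← reverse_mul, letter_true_mul_letter_false,
    reverse_one]

def letterUnit (j : Fin m) : (MagnusRing (Fin m) ℤ)ˣ :=
  ⟨letter (j, true), letter (j, false), letter_true_mul_letter_false j,
    letter_false_mul_letter_true j⟩

theorem val_cond_letterUnit (x : Fin m × Bool) :
    ((cond x.2 (letterUnit x.1) (letterUnit x.1)⁻¹ : (MagnusRing (Fin m) ℤ)ˣ) :
      MagnusRing (Fin m) ℤ) = letter x := by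
  obtain ⟨j, _ | _⟩ := x <;> rfl

def magnusHom : FreeGroup (Fin m) →* (MagnusRing (Fin m) ℤ)ˣ := FreeGroup.lift letterUnit

theorem magnus_eq_magnusHom (g : FreeGroup (Fin m)) :
    magnus g = (magnusHom g : MagnusRing (Fin m) ℤ) := by
  rw [magnus, magnusHom, ← FreeGroup.mk_toWord (x := g), FreeGroup.lift_mk, FreeGroup.toWord_mk,
    FreeGroup.reduce_toWord]
  induction g.toWord with
  | nil => rfl
  | cons x L ih =>
    rw [List.map_cons, List.foldr_cons, List.map_cons, List.prod_cons, Units.val_mul, ih,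
      val_cond_letterUnit]
    rfl

theorem magnusHom_mem_unitsSubgroup_one (g : FreeGroup (Fin m)) :
    magnusHom g ∈ degreeFiltration.unitsSubgroup 1 := by
  refine FreeGroup.range_lift_le ?_ ⟨g, rfl⟩
  rintro _ ⟨j, rfl⟩ w hw
  rw [List.length_eq_zero_iff.mp (Nat.lt_one_iff.mp hw)]
  rfl

end Magnus

/-- Mathlib's lower central series starts at index `0`, so `hg` says that `g ∈ Γ_{q+1}`. -/
theorem magnus_lowerCentralSeries {m : ℕ} (q : ℕ) (g : FreeGroup (Fin m))
    (hg : g ∈ (⊤ : Subgroup (FreeGroup (Fin m))).lowerCentralSeries q) :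
    magnus g [] = 1 ∧
      ∀ w : List (Fin m), 1 ≤ w.length → w.length ≤ q → magnus g w = 0 := by
  have hcoeff : ∀ w : List (Fin m), w.length < q + 1 → magnus g w = (1 : MagnusRing _ ℤ) w := by
    intro w hw
    rw [Magnus.magnus_eq_magnusHom]
    exact MagnusRing.apply_eq_one_apply_of_mem_unitsSubgroup
      (MagnusRing.degreeFiltration.lowerCentralSeries_le_comap
        Magnus.magnusHom_mem_unitsSubgroup_one q hg) hw
  refine ⟨hcoeff [] q.succ_pos, fun w hw hwq => ?_⟩
  rw [hcoeff w (Nat.lt_succ_of_le hwq), MagnusRing.one_apply, if_neg]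
  exact List.ne_nil_of_length_pos hw
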